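/- arXiv:2211.02667 — 3 statements merged into one kernel-verified Lean document; each statement's English description precedes it below -/
import Mathlib

section
/- Let Θ be a countable parameter set with prior p(θ) of full support, and suppose for each θ the map sending θ to its induced distribution over infinite trajectories is injective with mutually singular images (i.e., trajectory distributions for distinct θ are mutually singular). Then the posterior over θ given the first n observations converges almost surely to the point mass at the true parameter: if θ* ~ p and τ ~ P_{θ*}, then p(θ | τ_{≤n}) → δ_{θ*} almost surely as n → ∞. -/
open MeasureTheory Filter Topology
open scoped ENNReal

namespace Stmt2Aux

variable {Θ X : Type*} [Countable Θ] [Countable X]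
    [MeasurableSpace Θ] [MeasurableSingletonClass Θ]
    [MeasurableSpace X] [MeasurableSingletonClass X]

/-- The finite cylinder set determined by a tuple `y : Fin n → X`. -/
def cylF {n : ℕ} (y : Fin n → X) : Set (ℕ → X) := {ω | ∀ i : Fin n, ω (i : ℕ) = y i}

lemma measurableSet_cylF {n : ℕ} (y : Fin n → X) : MeasurableSet (cylF y) := by
  have h : cylF y = ⋂ i : Fin n, (fun ω : ℕ → X => ω (i : ℕ)) ⁻¹' {y i} := by
    ext ω; simp [cylF]
  rw [h]
  exact MeasurableSet.iInter fun i =>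
    (measurable_pi_apply (i : ℕ)) (measurableSet_singleton _)

lemma cylF_prefixMap (n : ℕ) (z : ℕ → X) :
    cylF (fun i : Fin n => z (i : ℕ)) = {ω : ℕ → X | ∀ i < n, ω i = z i} := by
  ext ω
  constructor
  · intro h i hi
    exact h ⟨i, hi⟩
  · intro h i
    exact h (i : ℕ) i.isLt

/-- The map taking a pair (parameter, trajectory) to the first `n` observations. -/
def prefixMap (Θ : Type*) {X : Type*} (n : ℕ) : Θ × (ℕ → X) → (Fin n → X) :=
  fun z i => z.2 (i : ℕ)

lemma measurable_prefixMap [MeasurableSpace Θ] (n : ℕ) :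
    Measurable (prefixMap Θ (X := X) n) :=
  measurable_pi_lambda _ fun i => (measurable_pi_apply (i : ℕ)).comp measurable_snd

/-- The filtration of the first `n` observations. -/
def FF : Filtration ℕ (inferInstance : MeasurableSpace (Θ × (ℕ → X))) where
  seq n := MeasurableSpace.comap (prefixMap Θ n) inferInstance
  mono' := by
    intro n m hnm
    dsimp only
    have h : prefixMap Θ (X := X) n =
        (fun (y : Fin m → X) (i : Fin n) => y (Fin.castLE hnm i)) ∘ prefixMap Θ m := rfl
    rw [h, ← MeasurableSpace.comap_comp]
    exact MeasurableSpace.comap_mono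
      (measurable_pi_lambda _ fun i => measurable_pi_apply _).comap_le
  le' n := (measurable_prefixMap n).comap_le

lemma comap_snd_le_iSup_FF :
    MeasurableSpace.comap (Prod.snd : Θ × (ℕ → X) → (ℕ → X)) inferInstance ≤
      ⨆ n, (FF (Θ := Θ) (X := X)) n := by
  have hpi : (inferInstance : MeasurableSpace (ℕ → X)) =
      ⨆ i : ℕ, MeasurableSpace.comap (fun ω : ℕ → X => ω i) inferInstance := rfl
  rw [hpi, MeasurableSpace.comap_iSup]
  refine iSup_le fun i => ?_
  have h : ((fun ω : ℕ → X => ω i) ∘ (Prod.snd : Θ × (ℕ → X) → (ℕ → X))) =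
      (fun y : Fin (i + 1) → X => y ⟨i, Nat.lt_succ_self i⟩) ∘ prefixMap Θ (i + 1) := rfl
  rw [MeasurableSpace.comap_comp, h, ← MeasurableSpace.comap_comp]
  refine le_trans (MeasurableSpace.comap_mono (measurable_pi_apply _).comap_le) ?_
  exact le_iSup (fun n => (FF (Θ := Θ) (X := X)) n) (i + 1)

end Stmt2Aux

open Stmt2Aux

/-- Posterior consistency: if the trajectory distributions of distinct parameters are
mutually singular and the prior has full support, then the posterior mass of the true
parameter converges to 1 almost surely under the joint distribution. -/
theorem stmt2 {Θ X : Type*} [Countable Θ] [Countable X]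
    [MeasurableSpace Θ] [MeasurableSingletonClass Θ]
    [MeasurableSpace X] [MeasurableSingletonClass X]
    (p : Θ → ENNReal) (hp1 : ∑' θ, p θ = 1) (hppos : ∀ θ, p θ ≠ 0)
    (P : Θ → Measure (ℕ → X)) (hPprob : ∀ θ, IsProbabilityMeasure (P θ))
    (hinj : Function.Injective P)
    (hsing : ∀ θ θ', θ ≠ θ' → (P θ).MutuallySingular (P θ'))
    -- the joint distribution of (θ*, trajectory)
    (μ : Measure (Θ × (ℕ → X)))
    (hμ : μ = Measure.sum (fun θ => p θ • (Measure.dirac θ).prod (P θ))) :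
    ∀ᵐ z ∂ μ, Tendsto (fun n =>
        p z.1 * P z.1 {ω | ∀ i < n, ω i = z.2 i} /
          ∑' θ, p θ * P θ {ω | ∀ i < n, ω i = z.2 i})
      atTop (nhds 1) := by
  classical
  -- the measure of a measurable set under μ
  have hμapp : ∀ E : Set (Θ × (ℕ → X)), MeasurableSet E →
      μ E = ∑' θ, p θ * P θ (Prod.mk θ ⁻¹' E) := by
    intro E hE
    rw [hμ, Measure.sum_apply _ hE]
    refine tsum_congr fun θ => ?_
    rw [Measure.smul_apply, Measure.dirac_prod,
      Measure.map_apply measurable_prodMk_left hE, smul_eq_mul]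
  haveI : IsProbabilityMeasure μ := by
    constructor
    rw [hμapp _ MeasurableSet.univ]
    simpa [measure_univ] using hp1
  -- the singularity witness sets
  obtain ⟨A, hAm, hA1, hA0⟩ : ∃ A : Θ → Set (ℕ → X), (∀ θ, MeasurableSet (A θ)) ∧
      (∀ θ, P θ (A θ) = 1) ∧ (∀ θ θ', θ ≠ θ' → P θ' (A θ) = 0) := by
    have h2 : ∀ θ θ' : Θ, ∃ t : Set (ℕ → X), MeasurableSet t ∧ P θ tᶜ = 0 ∧
        (θ ≠ θ' → P θ' t = 0) := by
      intro θ θ'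
      by_cases h : θ = θ'
      · exact ⟨Set.univ, MeasurableSet.univ, by simp, fun hc => absurd h hc⟩
      · have hs := hsing θ' θ (Ne.symm h)
        exact ⟨hs.nullSet, hs.measurableSet_nullSet, hs.measure_compl_nullSet,
          fun _ => hs.measure_nullSet⟩
    choose t htm ht1 ht0 using h2
    refine ⟨fun θ => ⋂ θ', t θ θ', fun θ => MeasurableSet.iInter fun θ' => htm θ θ',
      fun θ => ?_, fun θ θ' hne => ?_⟩
    · rw [← prob_compl_eq_zero_iff (MeasurableSet.iInter fun θ' => htm θ θ')]
      rw [Set.compl_iInter]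
      exact measure_iUnion_null fun θ' => ht1 θ θ'
    · exact measure_mono_null (Set.iInter_subset _ θ') (ht0 θ θ' hne)
  -- a.e. the trajectory lies in the witness set of the true parameter
  have hdiag : ∀ᵐ z ∂ μ, z.2 ∈ A z.1 := by
    have hE : MeasurableSet {z : Θ × (ℕ → X) | z.2 ∈ A z.1} := by
      have h : {z : Θ × (ℕ → X) | z.2 ∈ A z.1} = ⋃ θ, {θ} ×ˢ A θ := by
        ext z
        simp only [Set.mem_setOf_eq, Set.mem_iUnion, Set.mem_prod, Set.mem_singleton_iff]
        exact ⟨fun h => ⟨z.1, rfl, h⟩, by rintro ⟨i, rfl, hx⟩; exact hx⟩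
      rw [h]
      exact MeasurableSet.iUnion fun θ => (measurableSet_singleton θ).prod (hAm θ)
    rw [ae_iff]
    have hset : {a : Θ × (ℕ → X) | ¬ a.2 ∈ A a.1} = {z : Θ × (ℕ → X) | z.2 ∈ A z.1}ᶜ := rfl
    rw [hset, hμapp _ hE.compl]
    refine ENNReal.tsum_eq_zero.2 fun θ => ?_
    have h2 : Prod.mk θ ⁻¹' {z : Θ × (ℕ → X) | z.2 ∈ A z.1}ᶜ = (A θ)ᶜ := rfl
    rw [h2, (prob_compl_eq_zero_iff (hAm θ)).2 (hA1 θ), mul_zero]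
  -- key convergence for a fixed parameter θ0
  have key : ∀ θ0 : Θ, ∀ᵐ z ∂ μ, Tendsto (fun n =>
      (p θ0 * P θ0 {ω | ∀ i < n, ω i = z.2 i} /
        ∑' θ, p θ * P θ {ω | ∀ i < n, ω i = z.2 i}).toReal)
      atTop (𝓝 ((Prod.snd ⁻¹' A θ0).indicator (fun _ => (1 : ℝ)) z)) := by
    intro θ0
    set S : Set (Θ × (ℕ → X)) := Prod.snd ⁻¹' A θ0 with hS
    set g : Θ × (ℕ → X) → ℝ := S.indicator (fun _ => (1 : ℝ)) with hg
    have hSm0 : MeasurableSet S := measurable_snd (hAm θ0)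
    have hg_int : Integrable g μ := (integrable_const (1 : ℝ)).indicator hSm0
    have hgmeas : StronglyMeasurable[⨆ n, (FF (Θ := Θ) (X := X)) n] g := by
      refine stronglyMeasurable_const.indicator ?_
      have hle := comap_snd_le_iSup_FF (Θ := Θ) (X := X)
      exact hle _ ⟨A θ0, hAm θ0, rfl⟩
    -- the blocks of the filtration
    have hblk : ∀ (n : ℕ) (y : Fin n → X),
        prefixMap Θ n ⁻¹' {y} = (Prod.snd : Θ × (ℕ → X) → ℕ → X) ⁻¹' cylF y := by
      intro n y
      ext z
      simp only [Set.mem_preimage, Set.mem_singleton_iff, cylF, Set.mem_setOf_eq]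
      exact ⟨fun h i => congrFun h i, fun h => funext h⟩
    have hμblk : ∀ (n : ℕ) (y : Fin n → X),
        μ (Prod.snd ⁻¹' cylF y) = ∑' θ, p θ * P θ (cylF y) := by
      intro n y
      rw [hμapp _ (measurable_snd (measurableSet_cylF y))]
      rfl
    have hμAblk : ∀ (n : ℕ) (y : Fin n → X),
        μ (Prod.snd ⁻¹' A θ0 ∩ Prod.snd ⁻¹' cylF y) = p θ0 * P θ0 (cylF y) := by
      intro n y
      rw [hμapp _ (hSm0.inter (measurable_snd (measurableSet_cylF y)))]
      rw [tsum_eq_single θ0 ?side]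
      case side =>
        intro θ hθ
        have h1 : Prod.mk θ ⁻¹' (Prod.snd ⁻¹' A θ0 ∩ Prod.snd ⁻¹' cylF y) =
            A θ0 ∩ cylF y := rfl
        rw [h1, measure_mono_null Set.inter_subset_left (hA0 θ0 θ (Ne.symm hθ)), mul_zero]
      have h1 : Prod.mk θ0 ⁻¹' (Prod.snd ⁻¹' A θ0 ∩ Prod.snd ⁻¹' cylF y) =
          A θ0 ∩ cylF y := rfl
      rw [h1, Set.inter_comm, measure_inter_conull
        ((prob_compl_eq_zero_iff (hAm θ0)).2 (hA1 θ0))]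
    have hD_ne_top : ∀ (n : ℕ) (y : Fin n → X), (∑' θ, p θ * P θ (cylF y)) ≠ ∞ := by
      intro n y
      rw [← hμblk n y]
      exact measure_ne_top μ _
    have hN_le_D : ∀ (n : ℕ) (y : Fin n → X),
        p θ0 * P θ0 (cylF y) ≤ ∑' θ, p θ * P θ (cylF y) := fun n y => ENNReal.le_tsum θ0
    set gn : ℕ → (Θ × (ℕ → X)) → ℝ := fun n z =>
      (p θ0 * P θ0 (cylF (prefixMap Θ n z)) /
        ∑' θ, p θ * P θ (cylF (prefixMap Θ n z))).toReal with hgn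
    have hgn_meas : ∀ n, Measurable[(FF (Θ := Θ) (X := X)) n] (gn n) := by
      intro n
      exact (measurable_of_countable (fun y : Fin n → X =>
        (p θ0 * P θ0 (cylF y) / ∑' θ, p θ * P θ (cylF y)).toReal)).comp
        (Measurable.of_comap_le le_rfl)
    have hgn_le : ∀ n z, ‖gn n z‖ ≤ 1 := by
      intro n z
      rw [Real.norm_eq_abs, abs_of_nonneg ENNReal.toReal_nonneg]
      have h1 : p θ0 * P θ0 (cylF (prefixMap Θ n z)) /
          ∑' θ, p θ * P θ (cylF (prefixMap Θ n z)) ≤ 1 := by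
        refine ENNReal.div_le_of_le_mul ?_
        rw [one_mul]
        exact hN_le_D n _
      simpa using ENNReal.toReal_mono ENNReal.one_ne_top h1
    have hgn_int : ∀ n, Integrable (gn n) μ := by
      intro n
      refine (integrable_const (1 : ℝ)).mono'
        (((hgn_meas n).mono ((FF (Θ := Θ) (X := X)).le n) le_rfl).aestronglyMeasurable) ?_
      exact Filter.Eventually.of_forall (hgn_le n)
    have hcond : ∀ n, gn n =ᵐ[μ] μ[g | (FF (Θ := Θ) (X := X)) n] := by
      intro n
      refine ae_eq_condExp_of_forall_setIntegral_eq ((FF (Θ := Θ) (X := X)).le n) hg_int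
        (fun s _ _ => (hgn_int n).integrableOn) (fun s hs _ => ?_)
        (((hgn_meas n).stronglyMeasurable).aestronglyMeasurable)
      obtain ⟨B, -, rfl⟩ := hs
      have hBdecomp : prefixMap Θ n ⁻¹' B =
          ⋃ (y : B), prefixMap Θ n ⁻¹' {(y : Fin n → X)} := by
        ext z
        simp only [Set.mem_preimage, Set.mem_iUnion, Set.mem_singleton_iff]
        exact ⟨fun h => ⟨⟨_, h⟩, rfl⟩, by rintro ⟨y, hy⟩; rw [hy]; exact y.2⟩
      have hblkm : ∀ y : B, MeasurableSet (prefixMap Θ n ⁻¹' {(y : Fin n → X)}) :=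
        fun y => (measurable_prefixMap n) (measurableSet_singleton _)
      have hdisj : Pairwise (Function.onFun Disjoint
          fun y : B => prefixMap Θ n ⁻¹' {(y : Fin n → X)}) := by
        intro y y' hne
        refine Set.disjoint_left.2 fun z hz hz' => ?_
        rw [Set.mem_preimage, Set.mem_singleton_iff] at hz hz'
        exact hne (Subtype.ext ((hz.symm.trans hz')))
      rw [hBdecomp, integral_iUnion hblkm hdisj (hgn_int n).integrableOn,
        integral_iUnion hblkm hdisj hg_int.integrableOn]
      refine tsum_congr fun y => ?_
      -- per-block computation
      have hgconst : Set.EqOn (gn n) (fun _ =>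
          (p θ0 * P θ0 (cylF (y : Fin n → X)) /
            ∑' θ, p θ * P θ (cylF (y : Fin n → X))).toReal)
          (prefixMap Θ n ⁻¹' {(y : Fin n → X)}) := by
        intro z hz
        rw [Set.mem_preimage, Set.mem_singleton_iff] at hz
        simp only [hgn, hz]
      rw [setIntegral_congr_fun (hblkm y) hgconst, setIntegral_const]
      have hgi : ∫ z in prefixMap Θ n ⁻¹' {(y : Fin n → X)}, g z ∂μ =
          (μ (Prod.snd ⁻¹' A θ0 ∩ Prod.snd ⁻¹' cylF (y : Fin n → X))).toReal := by
        rw [hg, setIntegral_indicator hSm0, setIntegral_const, hblk n, Set.inter_comm]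
        simp
        rfl
      rw [hgi, hμAblk n, hblk n, measureReal_def, hμblk n]
      -- arithmetic
      have hND := hN_le_D n (y : Fin n → X)
      have hDtop := hD_ne_top n (y : Fin n → X)
      rcases eq_or_ne (∑' θ, p θ * P θ (cylF (y : Fin n → X))) 0 with h0 | h0
      · have hN0 : p θ0 * P θ0 (cylF (y : Fin n → X)) = 0 :=
          le_antisymm (h0 ▸ hND) zero_le
        simp [h0, hN0]
      · rw [smul_eq_mul, ← ENNReal.toReal_mul, mul_comm, ENNReal.div_mul_cancel h0 hDtop]
    have hlevy := hg_int.tendsto_ae_condExp hgmeas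
    have hae : ∀ᵐ z ∂ μ, ∀ n, gn n z = (μ[g | (FF (Θ := Θ) (X := X)) n]) z :=
      ae_all_iff.2 fun n => hcond n
    filter_upwards [hlevy, hae] with z hz1 hz2
    have hfun : (fun n => (p θ0 * P θ0 {ω | ∀ i < n, ω i = z.2 i} /
        ∑' θ, p θ * P θ {ω | ∀ i < n, ω i = z.2 i}).toReal) = fun n => gn n z := by
      funext n
      simp only [hgn]
      rw [show prefixMap Θ n z = (fun i : Fin n => z.2 (i : ℕ)) from rfl, cylF_prefixMap]
    rw [hfun]
    have hfun2 : (fun n => gn n z) = fun n => (μ[g | (FF (Θ := Θ) (X := X)) n]) z :=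
      funext hz2
    rw [hfun2]
    exact hz1
  replace key := ae_all_iff.2 key
  filter_upwards [key, hdiag] with z hz hzd
  have h := hz z.1
  rw [Set.indicator_of_mem (show z ∈ Prod.snd ⁻¹' A z.1 from hzd)] at h
  have hne : ∀ n, p z.1 * P z.1 {ω | ∀ i < n, ω i = z.2 i} /
      ∑' θ, p θ * P θ {ω | ∀ i < n, ω i = z.2 i} ≠ ∞ := by
    intro n
    refine ne_top_of_le_ne_top ENNReal.one_ne_top ?_
    refine ENNReal.div_le_of_le_mul ?_
    rw [one_mul]
    exact ENNReal.le_tsum z.1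
  rw [← ENNReal.tendsto_toReal_iff hne ENNReal.one_ne_top]
  simpa using h
end

section
/- In the confounded bandit, if the true latent is θ* and actions are chosen by any fixed policy that pulls every arm infinitely often almost surely, then the interventional posterior p_int(θ | τ_{≤n}) converges almost surely to the point mass at θ* as n → ∞. -/
open MeasureTheory Filter Topology

namespace Stmt6Aux

abbrev E := Fin 5 × Bool
abbrev Om := ℕ → E

/-- projection to the first `n` coordinates -/
def pr (n : ℕ) : Om → (Fin n → E) := fun ω i => ω i

lemma measurableSet_pr_preimage (n : ℕ) (S : Set (Fin n → E)) :
    MeasurableSet (pr n ⁻¹' S) := by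
  have : pr n ⁻¹' S = ⋃ v ∈ S, ⋂ i : Fin n, (fun ω : Om => ω i) ⁻¹' {v i} := by
    ext ω
    simp only [Set.mem_preimage, Set.mem_iUnion, Set.mem_iInter, Set.mem_singleton_iff]
    constructor
    · intro h; exact ⟨pr n ω, h, fun i => rfl⟩
    · rintro ⟨v, hv, hvi⟩
      have : pr n ω = v := funext hvi
      rwa [this]
  rw [this]
  exact (Set.toFinite S).measurableSet_biUnion fun v _ =>
    MeasurableSet.iInter fun i => (measurable_pi_apply (i : ℕ)) (measurableSet_singleton _)

/-- The filtration of the first `n` coordinates. -/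
def FF : Filtration ℕ (inferInstance : MeasurableSpace Om) where
  seq n := MeasurableSpace.comap (pr n) ⊤
  mono' := by
    intro m n hmn
    have hcomp : pr m = (fun v : Fin n → E => fun i : Fin m => v ⟨i, lt_of_lt_of_le i.2 hmn⟩) ∘ pr n := rfl
    simp only []
    rw [hcomp, ← MeasurableSpace.comap_comp]
    exact MeasurableSpace.comap_mono le_top
  le' := by
    rintro n s ⟨S, -, rfl⟩
    exact measurableSet_pr_preimage n S

lemma measurable_FF {n : ℕ} {β : Type*} [MeasurableSpace β] (g : (Fin n → E) → β) :
    Measurable[FF n] (fun ω => g (pr n ω)) := by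
  intro B hB
  exact ⟨g ⁻¹' B, trivial, rfl⟩


section Key

variable (θstar θ : Fin 5) (L : Fin 5 → Bool → Fin 5 → ENNReal)

/-- the real likelihood ratio factor -/
noncomputable def rr : E → ℝ := fun p => (L p.1 p.2 θ).toReal / (L p.1 p.2 θstar).toReal

/-- the likelihood ratio process -/
noncomputable def MM : ℕ → Om → ℝ := fun n ω => ∏ t ∈ Finset.range n, rr θstar θ L (ω t)

variable {θstar θ L}
variable (hL : ∀ act out θ, L act out θ =
      if act = θ then (if out then 3/4 else 1/4) else (if out then 1/4 else 3/4))

include hL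

lemma rr_pos (p : E) : 0 < rr θstar θ L p := by
  rcases p with ⟨a, o⟩
  simp only [rr, hL]
  rcases eq_or_ne a θ with h|h <;> rcases eq_or_ne a θstar with h'|h' <;>
    rcases eq_or_ne θ θstar with h''|h'' <;> cases o <;>
    simp_all [ENNReal.toReal_div] <;> norm_num

lemma rr_le (p : E) : rr θstar θ L p ≤ 3 := by
  rcases p with ⟨a, o⟩
  simp only [rr, hL]
  rcases eq_or_ne a θ with h|h <;> rcases eq_or_ne a θstar with h'|h' <;>
    rcases eq_or_ne θ θstar with h''|h'' <;> cases o <;>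
    simp_all [ENNReal.toReal_div] <;> norm_num

lemma rr_theta_star (hne : θ ≠ θstar) (p : E) (hp : p.1 = θstar) :
    rr θstar θ L p = 3 ∨ rr θstar θ L p = 1/3 := by
  rcases p with ⟨a, o⟩
  simp only [rr, hL]
  simp only at hp
  subst hp
  cases o <;> simp_all [hne, Ne.symm hne, ENNReal.toReal_div] <;> norm_num

lemma rr_sum (hne : θ ≠ θstar) (a : Fin 5) :
    rr θstar θ L (a, true) * (L a true θstar).toReal
      + rr θstar θ L (a, false) * (L a false θstar).toReal = 1 := by
  simp only [rr, hL]
  rcases eq_or_ne a θ with h|h <;> rcases eq_or_ne a θstar with h'|h' <;>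
    simp_all [hne, Ne.symm hne, ENNReal.toReal_div] <;> norm_num

lemma MM_meas (n : ℕ) : Measurable[FF n] (MM θstar θ L n) := by
  have h : MM θstar θ L n
      = fun ω => (fun v : Fin n → E => ∏ i : Fin n, rr θstar θ L (v i)) (pr n ω) := by
    funext ω
    simp only [MM]
    exact Finset.prod_range _
  rw [h]
  exact measurable_FF (fun v : Fin n → E => ∏ i : Fin n, rr θstar θ L (v i))

omit hL in
lemma MM_nonneg (hpos : ∀ p : E, 0 < rr θstar θ L p) (n : ℕ) (ω : Om) :
    0 ≤ MM θstar θ L n ω :=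
  Finset.prod_nonneg fun t _ => (hpos (ω t)).le

lemma MM_integrable (μ : Measure Om) [IsProbabilityMeasure μ] (n : ℕ) :
    Integrable (MM θstar θ L n) μ := by
  refine ⟨(((MM_meas hL n).mono (FF.le n) le_rfl)).aestronglyMeasurable, ?_⟩
  apply HasFiniteIntegral.of_bounded (C := (3:ℝ)^n)
  filter_upwards with ω
  rw [Real.norm_eq_abs, abs_of_nonneg (MM_nonneg (rr_pos hL) n ω)]
  calc MM θstar θ L n ω ≤ ∏ _t ∈ Finset.range n, (3:ℝ) :=
        Finset.prod_le_prod (fun t _ => (rr_pos hL (ω t)).le) (fun t _ => rr_le hL (ω t))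
    _ = (3:ℝ)^n := by simp

lemma cyl_step (hne : θ ≠ θstar) (μ : Measure Om) [IsProbabilityMeasure μ]
    (hmodel : ∀ (n : ℕ) (h : Om) (act : Fin 5) (out : Bool),
      μ {ω | (∀ i < n, ω i = h i) ∧ ω n = (act, out)} =
        L act out θstar * μ {ω | (∀ i < n, ω i = h i) ∧ (ω n).1 = act})
    (n : ℕ) (v : Fin n → E) :
    ∫ x in pr n ⁻¹' {v}, MM θstar θ L n x ∂μ
      = ∫ x in pr n ⁻¹' {v}, MM θstar θ L (n+1) x ∂μ := by
  classical
  set hh : Om := fun i => if hi : i < n then v ⟨i, hi⟩ else (θstar, true) with hhh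
  set s : Set Om := pr n ⁻¹' {v} with hs
  have hmem : ∀ ω : Om, ω ∈ s ↔ ∀ i < n, ω i = hh i := by
    intro ω
    simp only [hs, Set.mem_preimage, Set.mem_singleton_iff, funext_iff]
    constructor
    · intro h i hi
      have := h ⟨i, hi⟩
      simpa [pr, hhh, hi] using this
    · intro h i
      have := h i.1 i.2
      simpa [pr, hhh, i.2] using this
  have hms : MeasurableSet s := measurableSet_pr_preimage n {v}
  set c : ℝ := ∏ t ∈ Finset.range n, rr θstar θ L (hh t) with hc
  have hconstn : ∀ ω ∈ s, MM θstar θ L n ω = c := by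
    intro ω hω
    exact Finset.prod_congr rfl fun t ht => by
      rw [(hmem ω).1 hω t (Finset.mem_range.1 ht)]
  -- the refinement of s by the value of ω n
  set sp : E → Set Om := fun p => {ω | (∀ i < n, ω i = hh i) ∧ ω n = p} with hsp
  have hsp_eq : ∀ p, sp p = s ∩ (fun ω : Om => ω n) ⁻¹' {p} := by
    intro p
    ext ω
    simp only [hsp, Set.mem_setOf_eq, Set.mem_inter_iff, Set.mem_preimage,
      Set.mem_singleton_iff, hmem]
  have hsp_ms : ∀ p, MeasurableSet (sp p) := fun p => by
    rw [hsp_eq]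
    exact hms.inter ((measurable_pi_apply n) (measurableSet_singleton p))
  have hsp_disj : ∀ p q : E, p ≠ q → Disjoint (sp p) (sp q) := by
    intro p q hpq
    rw [Set.disjoint_left]
    rintro ω ⟨-, h1⟩ ⟨-, h2⟩
    exact hpq (h1 ▸ h2)
  have hs_union : s = ⋃ p ∈ (Finset.univ : Finset E), sp p := by
    ext ω
    simp only [Set.mem_iUnion, Finset.mem_univ, exists_prop, true_and, hsp,
      Set.mem_setOf_eq]
    constructor
    · intro h
      exact ⟨ω n, (hmem ω).1 h, rfl⟩
    · rintro ⟨p, h1, -⟩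
      exact (hmem ω).2 h1
  -- the refinement of s by the value of the action (ω n).1
  set D : Fin 5 → Set Om := fun a => {ω | (∀ i < n, ω i = hh i) ∧ (ω n).1 = a} with hD
  have hD_eq : ∀ a, D a = s ∩ (fun ω : Om => (ω n).1) ⁻¹' {a} := by
    intro a
    ext ω
    simp only [hD, Set.mem_setOf_eq, Set.mem_inter_iff, Set.mem_preimage,
      Set.mem_singleton_iff, hmem]
  have hD_ms : ∀ a, MeasurableSet (D a) := fun a => by
    rw [hD_eq]
    exact hms.inter (((measurable_pi_apply n).fst) (measurableSet_singleton a))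
  have hD_sum : ∑ a : Fin 5, μ (D a) = μ s := by
    rw [← measure_biUnion_finset ?_ (fun a _ => hD_ms a)]
    · congr 1
      ext ω
      simp only [Set.mem_iUnion, Finset.mem_univ, exists_prop, true_and, hD,
        Set.mem_setOf_eq]
      constructor
      · rintro ⟨a, h1, -⟩
        exact (hmem ω).2 h1
      · intro h
        exact ⟨(ω n).1, (hmem ω).1 h, rfl⟩
    · intro a _ b _ hab
      rw [Function.onFun, Set.disjoint_left]
      rintro ω ⟨-, h1⟩ ⟨-, h2⟩
      exact hab (h1 ▸ h2)
  -- LHS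
  have hLHS : ∫ x in s, MM θstar θ L n x ∂μ = (μ s).toReal * c := by
    rw [setIntegral_congr_fun hms hconstn, setIntegral_const, smul_eq_mul, measureReal_def]
  -- RHS
  have hRHS : ∫ x in s, MM θstar θ L (n+1) x ∂μ
      = ∑ p : E, (μ (sp p)).toReal * (c * rr θstar θ L p) := by
    rw [hs_union, integral_biUnion_finset _ (fun p _ => hsp_ms p)
      (fun p _ q _ hpq => hsp_disj p q hpq)
      (fun p _ => (MM_integrable hL μ (n+1)).integrableOn)]
    refine Finset.sum_congr rfl fun p _ => ?_
    have hconst : ∀ ω ∈ sp p, MM θstar θ L (n+1) ω = c * rr θstar θ L p := by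
      rintro ω ⟨h1, h2⟩
      rw [MM, Finset.prod_range_succ, h2]
      congr 1
      exact Finset.prod_congr rfl fun t ht => by rw [h1 t (Finset.mem_range.1 ht)]
    rw [setIntegral_congr_fun (hsp_ms p) hconst, setIntegral_const, smul_eq_mul, measureReal_def]
  rw [hLHS, hRHS]
  have hmodel' : ∀ p : E, μ (sp p) = L p.1 p.2 θstar * μ (D p.1) := by
    rintro ⟨a, o⟩
    exact hmodel n hh a o
  rw [Fintype.sum_prod_type]
  have : ∀ a : Fin 5, ∑ o : Bool, (μ (sp (a, o))).toReal * (c * rr θstar θ L (a, o))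
      = c * (μ (D a)).toReal := by
    intro a
    have hfin : μ (D a) ≠ ⊤ := measure_ne_top μ _
    rw [Fintype.sum_bool]
    rw [hmodel' (a, true), hmodel' (a, false)]
    simp only [ENNReal.toReal_mul]
    have := rr_sum hL hne a
    linear_combination ((μ (D a)).toReal * c) * this
  simp_rw [this]
  rw [← Finset.mul_sum, ← ENNReal.toReal_sum (fun a _ => measure_ne_top μ _), hD_sum]
  ring

lemma MM_martingale (hne : θ ≠ θstar) (μ : Measure Om) [IsProbabilityMeasure μ]
    (hmodel : ∀ (n : ℕ) (h : Om) (act : Fin 5) (out : Bool),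
      μ {ω | (∀ i < n, ω i = h i) ∧ ω n = (act, out)} =
        L act out θstar * μ {ω | (∀ i < n, ω i = h i) ∧ (ω n).1 = act}) :
    Martingale (MM θstar θ L) FF μ := by
  classical
  refine martingale_nat (fun n => ((MM_meas hL n)).stronglyMeasurable)
    (fun n => MM_integrable hL μ n) (fun i => ?_)
  refine ae_eq_condExp_of_forall_setIntegral_eq (FF.le i) (MM_integrable hL μ (i+1))
    (fun s _ _ => (MM_integrable hL μ i).integrableOn) ?_
    (((MM_meas hL i)).stronglyMeasurable.aestronglyMeasurable)
  rintro s ⟨S, -, rfl⟩ -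
  have hU : pr i ⁻¹' S = ⋃ v ∈ (Set.toFinite S).toFinset, pr i ⁻¹' {v} := by
    ext ω
    simp only [Set.mem_preimage, Set.mem_iUnion, Set.mem_singleton_iff,
      Set.Finite.mem_toFinset, exists_prop]
    exact ⟨fun h => ⟨pr i ω, h, rfl⟩, fun ⟨v, hv, he⟩ => he ▸ hv⟩
  have hdisj : ((Set.toFinite S).toFinset : Set (Fin i → E)).Pairwise
      (Function.onFun Disjoint fun v => pr i ⁻¹' {v}) := by
    intro v _ w _ hvw
    rw [Function.onFun, Set.disjoint_left]
    rintro ω h1 h2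
    simp only [Set.mem_preimage, Set.mem_singleton_iff] at h1 h2
    exact hvw (h1 ▸ h2)
  rw [hU,
    integral_biUnion_finset _ (fun v _ => measurableSet_pr_preimage i {v}) hdisj
      (fun v _ => (MM_integrable hL μ i).integrableOn),
    integral_biUnion_finset _ (fun v _ => measurableSet_pr_preimage i {v}) hdisj
      (fun v _ => (MM_integrable hL μ (i+1)).integrableOn)]
  exact Finset.sum_congr rfl fun v _ => cyl_step hL hne μ hmodel i v

lemma MM_eLpNorm (hne : θ ≠ θstar) (μ : Measure Om) [IsProbabilityMeasure μ]
    (hmodel : ∀ (n : ℕ) (h : Om) (act : Fin 5) (out : Bool),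
      μ {ω | (∀ i < n, ω i = h i) ∧ ω n = (act, out)} =
        L act out θstar * μ {ω | (∀ i < n, ω i = h i) ∧ (ω n).1 = act})
    (n : ℕ) : eLpNorm (MM θstar θ L n) 1 μ ≤ 1 := by
  have hint : ∫ ω, MM θstar θ L n ω ∂μ = 1 := by
    have h1 : ∫ ω, MM θstar θ L n ω ∂μ = ∫ ω, MM θstar θ L 0 ω ∂μ := by
      rw [← integral_congr_ae ((MM_martingale hL hne μ hmodel).condExp_ae_eq (Nat.zero_le n)),
        integral_condExp (FF.le 0)]
    rw [h1]
    simp [MM]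
  rw [eLpNorm_one_eq_lintegral_enorm]
  have h2 : ∫⁻ ω, ‖MM θstar θ L n ω‖ₑ ∂μ
      = ∫⁻ ω, ENNReal.ofReal (MM θstar θ L n ω) ∂μ := by
    refine lintegral_congr fun ω => ?_
    exact Real.enorm_eq_ofReal (MM_nonneg (rr_pos hL) n ω)
  rw [h2, ← ofReal_integral_eq_lintegral_ofReal (MM_integrable hL μ n)
    (Filter.Eventually.of_forall fun ω => MM_nonneg (rr_pos hL) n ω), hint]
  simp

lemma key (hne : θ ≠ θstar) (μ : Measure Om) [IsProbabilityMeasure μ]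
    (hmodel : ∀ (n : ℕ) (h : Om) (act : Fin 5) (out : Bool),
      μ {ω | (∀ i < n, ω i = h i) ∧ ω n = (act, out)} =
        L act out θstar * μ {ω | (∀ i < n, ω i = h i) ∧ (ω n).1 = act})
    (hio : ∀ᵐ ω ∂ μ, ∀ act : Fin 5, {t | (ω t).1 = act}.Infinite) :
    ∀ᵐ ω ∂ μ, Tendsto (fun n => MM θstar θ L n ω) atTop (𝓝 0) := by
  have hmart := MM_martingale hL hne μ hmodel
  filter_upwards [hmart.submartingale.ae_tendsto_limitProcess
      (fun n => MM_eLpNorm hL hne μ hmodel n), hio] with ω hconv hioω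
  set cl := FF.limitProcess (MM θstar θ L) μ ω with hcl
  suffices hcl0 : cl = 0 by rwa [hcl0] at hconv
  by_contra hne0
  have hnonneg : 0 ≤ cl := ge_of_tendsto' hconv fun n => MM_nonneg (rr_pos hL) n ω
  have hpos : 0 < cl := lt_of_le_of_ne hnonneg (Ne.symm hne0)
  have hdiff : Tendsto (fun n => MM θstar θ L (n+1) ω - MM θstar θ L n ω) atTop (𝓝 0) := by
    have h := (hconv.comp (tendsto_add_atTop_nat 1)).sub hconv
    simpa using h
  have hev1 : ∀ᶠ n in atTop, cl/2 < MM θstar θ L n ω :=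
    hconv.eventually (eventually_gt_nhds (by linarith))
  have hev2 : ∀ᶠ n in atTop, |MM θstar θ L (n+1) ω - MM θstar θ L n ω| < cl/3 := by
    have h := hdiff.eventually (eventually_abs_sub_lt 0 (by linarith : (0:ℝ) < cl/3))
    simpa using h
  have hfreq : ∃ᶠ t in atTop, (ω t).1 = θstar :=
    Nat.frequently_atTop_iff_infinite.2 (hioω θstar)
  obtain ⟨t, ht1, ht2, ht3⟩ := (hfreq.and_eventually (hev1.and hev2)).exists
  have hstep : MM θstar θ L (t+1) ω = MM θstar θ L t ω * rr θstar θ L (ω t) :=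
    Finset.prod_range_succ _ _
  have habs : |MM θstar θ L (t+1) ω - MM θstar θ L t ω|
      = MM θstar θ L t ω * |rr θstar θ L (ω t) - 1| := by
    rw [hstep, ← mul_sub_one, abs_mul, abs_of_nonneg (MM_nonneg (rr_pos hL) t ω)]
  have h23 : (2/3:ℝ) ≤ |rr θstar θ L (ω t) - 1| := by
    rcases rr_theta_star hL hne (ω t) ht1 with h|h <;> rw [h]
    · rw [abs_of_nonneg (by norm_num)]; norm_num
    · rw [abs_of_nonpos (by norm_num)]; norm_num
  have hge : cl/3 ≤ MM θstar θ L t ω * |rr θstar θ L (ω t) - 1| := by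
    nlinarith [h23, ht2, hpos]
  linarith [habs ▸ hge, ht3]

end Key

end Stmt6Aux

/-- In the confounded bandit with true latent θ*, if the action process pulls every arm
infinitely often almost surely, the interventional posterior converges a.s. to the point
mass at θ*. A trajectory `ω : ℕ → Fin 5 × Bool` records at each step the action pulled
and the subsequent outcome. -/
theorem stmt6 (θstar : Fin 5)
    (L : Fin 5 → Bool → Fin 5 → ENNReal)
    (hL : ∀ act out θ, L act out θ =
      if act = θ then (if out then 3/4 else 1/4) else (if out then 1/4 else 3/4))
    (μ : Measure (ℕ → Fin 5 × Bool)) (hμprob : IsProbabilityMeasure μ)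
    -- outcomes are conditionally independent given actions, with likelihood L · θ*
    (hmodel : ∀ (n : ℕ) (h : ℕ → Fin 5 × Bool) (act : Fin 5) (out : Bool),
      μ {ω | (∀ i < n, ω i = h i) ∧ ω n = (act, out)} =
        L act out θstar * μ {ω | (∀ i < n, ω i = h i) ∧ (ω n).1 = act})
    -- every arm is pulled infinitely often with probability one
    (hio : ∀ᵐ ω ∂ μ, ∀ act : Fin 5, {t | (ω t).1 = act}.Infinite) :
    ∀ᵐ ω ∂ μ, Tendsto (fun n =>
        ((1 : ENNReal)/5) * (∏ t ∈ Finset.range n, L ((ω t).1) ((ω t).2) θstar) /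
          ∑ θ, ((1 : ENNReal)/5) * ∏ t ∈ Finset.range n, L ((ω t).1) ((ω t).2) θ)
      atTop (nhds 1) := by
  classical
  have hkey : ∀ᵐ ω ∂ μ, ∀ θ : Fin 5, θ ≠ θstar →
      Tendsto (fun n => Stmt6Aux.MM θstar θ L n ω) atTop (𝓝 0) := by
    rw [ae_all_iff]
    intro θ
    by_cases hθ : θ = θstar
    · filter_upwards with ω h
      exact absurd hθ h
    · filter_upwards [Stmt6Aux.key hL hθ μ hmodel hio] with ω h _
      exact h
  -- basic positivity/finiteness of the likelihood factors
  have hfac0 : ∀ (a : Fin 5) (o : Bool) (θ' : Fin 5), L a o θ' ≠ 0 := by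
    intro a o θ'
    rw [hL]
    split_ifs <;> norm_num
  have hfactop : ∀ (a : Fin 5) (o : Bool) (θ' : Fin 5), L a o θ' ≠ ⊤ := by
    intro a o θ'
    rw [hL]
    split_ifs <;> norm_num <;>
      exact (ENNReal.div_lt_top (by norm_num) (by norm_num)).ne
  filter_upwards [hkey] with ω hω
  set P : Fin 5 → ℕ → ENNReal :=
    fun θ' n => ∏ t ∈ Finset.range n, L ((ω t).1) ((ω t).2) θ' with hPdef
  have hP0 : ∀ θ' n, P θ' n ≠ 0 := fun θ' n =>
    Finset.prod_ne_zero_iff.2 fun t _ => hfac0 _ _ _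
  have hPtop : ∀ θ' n, P θ' n ≠ ⊤ := fun θ' n =>
    (ENNReal.prod_lt_top fun t _ => (hfactop _ _ _).lt_top).ne
  have hEq : ∀ n, ((1 : ENNReal)/5) * P θstar n / ∑ θ', ((1 : ENNReal)/5) * P θ' n
      = (∑ θ', P θ' n / P θstar n)⁻¹ := by
    intro n
    rw [← Finset.mul_sum,
      ENNReal.mul_div_mul_left _ _ (by norm_num) (by norm_num),
      ← ENNReal.inv_div (Or.inl (hPtop θstar n)) (Or.inl (hP0 θstar n))]
    congr 1
    simp [div_eq_mul_inv, Finset.sum_mul]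
  have hlim : Tendsto (fun n => ∑ θ', P θ' n / P θstar n) atTop
      (𝓝 (∑ θ' : Fin 5, if θ' = θstar then 1 else 0)) := by
    refine tendsto_finset_sum _ fun θ' _ => ?_
    by_cases hθ : θ' = θstar
    · subst hθ
      have h1 : ∀ n, P θ' n / P θ' n = 1 := fun n => ENNReal.div_self (hP0 θ' n) (hPtop θ' n)
      simp only [h1, if_pos rfl]
      exact tendsto_const_nhds
    · simp only [if_neg hθ]
      have hrepr : ∀ n, P θ' n / P θstar n = ENNReal.ofReal (Stmt6Aux.MM θstar θ' L n ω) := by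
        intro n
        rw [← ENNReal.ofReal_toReal ((ENNReal.div_lt_top (hPtop θ' n) (hP0 θstar n)).ne)]
        congr 1
        simp only [Stmt6Aux.MM, Stmt6Aux.rr]
        rw [Finset.prod_div_distrib, ENNReal.toReal_div, ENNReal.toReal_prod,
          ENNReal.toReal_prod]
      simp_rw [hrepr]
      have h0 : (0 : ENNReal) = ENNReal.ofReal 0 := by simp
      rw [h0]
      exact ENNReal.tendsto_ofReal (hω θ' hθ)
  have hsum1 : (∑ θ' : Fin 5, if θ' = θstar then (1 : ENNReal) else 0) = 1 := by simp
  rw [hsum1] at hlim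
  have hfin : Tendsto (fun n => (∑ θ', P θ' n / P θstar n)⁻¹) atTop (𝓝 (1 : ENNReal)⁻¹) :=
    ENNReal.tendsto_inv_iff.2 hlim
  simp only [inv_one] at hfin
  have hfun : (fun n => ((1 : ENNReal)/5) * (∏ t ∈ Finset.range n, L ((ω t).1) ((ω t).2) θstar) /
          ∑ θ, ((1 : ENNReal)/5) * ∏ t ∈ Finset.range n, L ((ω t).1) ((ω t).2) θ)
      = fun n => (∑ θ', P θ' n / P θstar n)⁻¹ := funext hEq
  rw [hfun]
  exact hfin
end

section
/- Identifiability of the prior over recurrent kernels from trajectory data: let Θ be a finite set of pairwise distinct recurrent transition kernels on a countable state space, and let p, p' be priors on Θ. If the induced distributions over infinite trajectories (mixing over θ ~ prior and rolling out kernel θ from a fixed initial distribution λ with full support) coincide, then p = p'. -/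
open MeasureTheory Filter

set_option linter.unusedSectionVars false

namespace Stmt17Aux

variable {S : Type*} [DecidableEq S] {Θ : Type*}

/-- weight of a path given as a list of states -/
noncomputable def wt (K : Θ → S → PMF S) (θ : Θ) : List S → ENNReal
  | [] => 1
  | [_] => 1
  | x :: y :: t => K θ x y * wt K θ (y :: t)
termination_by l => l.length

@[simp] lemma wt_nil (K : Θ → S → PMF S) (θ : Θ) : wt K θ [] = 1 := by simp [wt]
@[simp] lemma wt_single (K : Θ → S → PMF S) (θ : Θ) (x : S) : wt K θ [x] = 1 := by simp [wt]
@[simp] lemma wt_cons_cons (K : Θ → S → PMF S) (θ : Θ) (x y : S) (t : List S) :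
    wt K θ (x :: y :: t) = K θ x y * wt K θ (y :: t) := by simp [wt]

lemma pmf_le_one (f : PMF S) (y : S) : f y ≤ 1 := by
  have := f.coe_le_one y
  simpa using this

lemma wt_le_one (K : Θ → S → PMF S) (θ : Θ) : ∀ l : List S, wt K θ l ≤ 1
  | [] => by simp
  | [_] => by simp
  | x :: y :: t => by
      rw [wt_cons_cons]
      exact mul_le_one' (pmf_le_one _ _) (wt_le_one K θ (y :: t))

lemma wt_ne_top (K : Θ → S → PMF S) (θ : Θ) (l : List S) : wt K θ l ≠ ⊤ :=
  fun h => by simpa [h] using wt_le_one K θ l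

def lastD (d : S) (l : List S) : S := l.getD (l.length - 1) d

def CylL (d : S) (l : List S) : Set (ℕ → S) := {ω | ∀ i < l.length, ω i = l.getD i d}

def Cont (d x : S) : Set (List S) :=
  {q | q ≠ [] ∧ lastD d q = x ∧ ∀ i, i + 1 < q.length → q.getD i d ≠ x}

@[simp] lemma lastD_single (d x : S) : lastD d [x] = x := rfl

lemma lastD_cons (d x : S) (l : List S) (hl : l ≠ []) :
    lastD d (x :: l) = lastD d l := by
  obtain ⟨a, t, rfl⟩ := List.exists_cons_of_ne_nil hl
  simp [lastD]

lemma wt_cons (K : Θ → S → PMF S) (θ : Θ) (d x : S) (l : List S) (hl : l ≠ []) :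
    wt K θ (x :: l) = K θ x (l.getD 0 d) * wt K θ l := by
  obtain ⟨a, t, rfl⟩ := List.exists_cons_of_ne_nil hl
  simp

lemma wt_append (K : Θ → S → PMF S) (θ : Θ) (d : S) :
    ∀ (g : List S), g ≠ [] → ∀ q : List S,
      wt K θ (g ++ q) = wt K θ g * wt K θ (lastD d g :: q)
  | [], h => absurd rfl h
  | [x], _ => by intro q; simp
  | x :: y :: t, _ => by
      intro q
      rw [lastD_cons d x (y :: t) (by simp)]
      have IH := wt_append K θ d (y :: t) (by simp) q
      simp only [List.cons_append] at IH ⊢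
      rw [wt_cons_cons, wt_cons_cons, IH, mul_assoc]

lemma wt_eq_prod (K : Θ → S → PMF S) (θ : Θ) (d : S) :
    ∀ (l : List S), l ≠ [] →
      wt K θ l = ∏ k ∈ Finset.range (l.length - 1),
        K θ (l.getD k d) (l.getD (k + 1) d)
  | [], h => absurd rfl h
  | [x], _ => by simp
  | x :: y :: t, _ => by
      have IH := wt_eq_prod K θ d (y :: t) (by simp)
      rw [wt_cons_cons, IH]
      have hlen : (x :: y :: t).length - 1 = ((y :: t).length - 1) + 1 := by
        simp
      rw [hlen, Finset.prod_range_succ']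
      simp [mul_comm]

lemma getD_lt {l : List S} {n : ℕ} (h : n < l.length) (d : S) : l.getD n d = l[n] := by
  simp [List.getD_eq_getElem?_getD, List.getElem?_eq_getElem h]

lemma getD_append_right (g r : List S) (j : ℕ) (d : S) :
    (g ++ r).getD (g.length + j) d = r.getD j d := by
  rw [List.getD_eq_getElem?_getD, List.getD_eq_getElem?_getD,
    List.getElem?_append_right (by omega), Nat.add_sub_cancel_left]

lemma getD_append_left (g r : List S) {j : ℕ} (hj : j < g.length) (d : S) :
    (g ++ r).getD j d = g.getD j d := by
  rw [List.getD_eq_getElem?_getD, List.getD_eq_getElem?_getD, List.getElem?_append_left hj]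

lemma cylL_measurable [MeasurableSpace S] [MeasurableSingletonClass S] (d : S) (l : List S) :
    MeasurableSet (CylL d l) := by
  have : CylL d l = ⋂ (i : ℕ), ⋂ (_ : i < l.length), ((fun ω : ℕ → S => ω i) ⁻¹' {l.getD i d}) := by
    ext ω; simp [CylL]
  rw [this]
  exact MeasurableSet.iInter fun i => MeasurableSet.iInter fun _ =>
    (measurable_pi_apply i) (measurableSet_singleton _)

lemma mem_cylL_append {d : S} {g r : List S} {ω : ℕ → S} (hω : ω ∈ CylL d (g ++ r)) :
    ∀ j, j < r.length → r.getD j d = ω (g.length + j) := by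
  intro j hj
  have := hω (g.length + j) (by rw [List.length_append]; omega)
  rw [this, getD_append_right]

lemma cont_agree_false (d x : S) {q q' : List S} (hq : q ∈ Cont d x) (hq' : q' ∈ Cont d x)
    (hlt : q.length < q'.length) (hag : ∀ j, j < q.length → q.getD j d = q'.getD j d) :
    False := by
  obtain ⟨hne, hlast, _⟩ := hq
  obtain ⟨_, _, hint'⟩ := hq'
  have h1 : 0 < q.length := List.length_pos_iff.2 hne
  have h2 : q'.getD (q.length - 1) d ≠ x := hint' _ (by omega)
  exact h2 (by rw [← hag _ (by omega)]; exact hlast)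

lemma cylL_disjoint (d x : S) (g : List S) {q q' : List S} (hq : q ∈ Cont d x)
    (hq' : q' ∈ Cont d x) (hne : q ≠ q') :
    Disjoint (CylL d (g ++ q)) (CylL d (g ++ q')) := by
  rw [Set.disjoint_left]
  intro ω h1 h2
  have a1 := mem_cylL_append h1
  have a2 := mem_cylL_append h2
  rcases lt_trichotomy q.length q'.length with h | h | h
  · exact cont_agree_false d x hq hq' h (fun j hj => by rw [a1 j hj, a2 j (by omega)])
  · apply hne
    apply List.ext_getElem h
    intro n h1' h2'
    rw [← getD_lt h1' d, ← getD_lt h2' d, a1 n h1', a2 n h2']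
  · exact cont_agree_false d x hq' hq h (fun j hj => by rw [a2 j hj, a1 j (by omega)])

lemma cylL_cover (d x : S) (g : List S) (hg : g ≠ []) :
    CylL d g ⊆ {ω | ¬ ({n | ω n = x}).Infinite} ∪ ⋃ q : ↥(Cont d x), CylL d (g ++ (q : List S)) := by
  intro ω hω
  by_cases hinf : ({n | ω n = x}).Infinite
  · right
    have hex : ∃ m, g.length ≤ m ∧ ω m = x := by
      obtain ⟨m, hm, hgt⟩ := hinf.exists_gt g.length
      exact ⟨m, le_of_lt hgt, hm⟩
    classical
    set m := Nat.find hex with hm_def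
    obtain ⟨hmge, hmx⟩ := Nat.find_spec hex
    set q : List S := (List.range (m + 1 - g.length)).map (fun j => ω (g.length + j)) with hq_def
    have hqlen : q.length = m + 1 - g.length := by simp [hq_def]
    have hqpos : 0 < q.length := by omega
    have hqget : ∀ j, j < q.length → q.getD j d = ω (g.length + j) := by
      intro j hj
      rw [getD_lt hj d]
      simp only [hq_def, List.getElem_map, List.getElem_range]
    have hqcont : q ∈ Cont d x := by
      refine ⟨List.ne_nil_of_length_pos hqpos, ?_, ?_⟩
      · rw [lastD, hqget _ (by omega)]
        have : g.length + (q.length - 1) = m := by omega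
        rw [this]; exact hmx
      · intro i hi
        rw [hqget _ (by omega)]
        intro hix
        have hlt : g.length + i < m := by omega
        exact (Nat.find_min hex hlt) ⟨by omega, hix⟩
    refine Set.mem_iUnion.2 ⟨⟨q, hqcont⟩, ?_⟩
    show ω ∈ CylL d (g ++ q)
    intro i hi
    rw [List.length_append] at hi
    rcases Nat.lt_or_ge i g.length with h | h
    · rw [getD_append_left _ _ h]; exact hω i h
    · obtain ⟨j, rfl⟩ := Nat.exists_eq_add_of_le h
      rw [getD_append_right, hqget _ (by omega)]
  · left; exact hinf



lemma exists_pos_path (K : Θ → S → PMF S) (θ : Θ) (d : S)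
    (stepn : Θ → ℕ → S → S → ENNReal)
    (hstep0 : ∀ θ x y, stepn θ 0 x y = if x = y then 1 else 0)
    (hstepS : ∀ θ n x y, stepn θ (n + 1) x y = ∑' z, K θ x z * stepn θ n z y) :
    ∀ (n : ℕ) (x y : S), stepn θ n x y ≠ 0 →
      ∃ l : List S, l ≠ [] ∧ l.getD 0 d = x ∧ lastD d l = y ∧ wt K θ l ≠ 0
  | 0, x, y, h => by
      rw [hstep0] at h
      have hxy : x = y := by by_contra hne; rw [if_neg hne] at h; exact h rfl
      exact ⟨[x], by simp, by simp, by simp [lastD, hxy], by simp⟩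
  | (n+1), x, y, h => by
      rw [hstepS] at h
      have hex : ∃ z, K θ x z * stepn θ n z y ≠ 0 := by
        by_contra hall
        push_neg at hall
        exact h (ENNReal.tsum_eq_zero.2 hall)
      obtain ⟨z, hz⟩ := hex
      have hK : K θ x z ≠ 0 := fun h0 => hz (by rw [h0, zero_mul])
      have hs : stepn θ n z y ≠ 0 := fun h0 => hz (by rw [h0, mul_zero])
      obtain ⟨l, hl, h0, hlast, hw⟩ := exists_pos_path K θ d stepn hstep0 hstepS n z y hs
      refine ⟨x :: l, by simp, by simp, ?_, ?_⟩
      · rw [lastD_cons d x l hl]; exact hlast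
      · rw [wt_cons K θ d x l hl, h0]
        exact mul_ne_zero hK hw

section Measures
variable [Countable S] [MeasurableSpace S] [MeasurableSingletonClass S]

lemma meas_cylL (K : Θ → S → PMF S) (θ : Θ) (d x : S) (m : Measure (ℕ → S))
    (hm : ∀ (n : ℕ) (h : ℕ → S), m {ω | ∀ i < n + 1, ω i = h i} =
      (if h 0 = x then 1 else 0) * ∏ k ∈ Finset.range n, K θ (h k) (h (k + 1)))
    (l : List S) (hl : l ≠ []) :
    m (CylL d l) = (if l.getD 0 d = x then 1 else 0) * wt K θ l := by
  have hpos : 0 < l.length := List.length_pos_iff.2 hl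
  have h1 := hm (l.length - 1) (fun i => l.getD i d)
  have hlen : l.length - 1 + 1 = l.length := by omega
  rw [hlen] at h1
  have hset : CylL d l = {ω | ∀ i < l.length, ω i = l.getD i d} := rfl
  rw [hset, h1, wt_eq_prod K θ d l hl]

lemma tsum_cont_le_one (K : Θ → S → PMF S) (θ : Θ) (d x y : S) (m : Measure (ℕ → S))
    [IsProbabilityMeasure m]
    (hm : ∀ (n : ℕ) (h : ℕ → S), m {ω | ∀ i < n + 1, ω i = h i} =
      (if h 0 = y then 1 else 0) * ∏ k ∈ Finset.range n, K θ (h k) (h (k + 1))) :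
    ∑' q : ↥(Cont d x), wt K θ (y :: (q : List S)) ≤ 1 := by
  have h1 : ∀ q : ↥(Cont d x), m (CylL d ([y] ++ (q : List S))) = wt K θ (y :: (q : List S)) := by
    intro q
    rw [meas_cylL K θ d y m hm ([y] ++ (q : List S)) (by simp)]
    have h2 : ([y] ++ (q : List S)).getD 0 d = y := by
      rw [getD_append_left _ _ (by simp)]; rfl
    rw [h2, if_pos rfl, one_mul]
    rfl
  have hdisj : Pairwise (Function.onFun Disjoint fun q : ↥(Cont d x) => CylL d ([y] ++ (q : List S))) :=
    fun a b hab => cylL_disjoint d x [y] a.2 b.2 (Subtype.coe_injective.ne hab)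
  have hmeas : ∀ q : ↥(Cont d x), MeasurableSet (CylL d ([y] ++ (q : List S))) :=
    fun q => cylL_measurable d _
  calc ∑' q : ↥(Cont d x), wt K θ (y :: (q : List S))
      = ∑' q : ↥(Cont d x), m (CylL d ([y] ++ (q : List S))) := by
        exact tsum_congr fun q => (h1 q).symm
    _ = m (⋃ q : ↥(Cont d x), CylL d ([y] ++ (q : List S))) := (measure_iUnion hdisj hmeas).symm
    _ ≤ 1 := prob_le_one

lemma Hone (K : Θ → S → PMF S) (θ : Θ) (d x y : S)
    (νx νy : Measure (ℕ → S)) [IsProbabilityMeasure νx] [IsProbabilityMeasure νy]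
    (hcx : ∀ (n : ℕ) (h : ℕ → S), νx {ω | ∀ i < n + 1, ω i = h i} =
      (if h 0 = x then 1 else 0) * ∏ k ∈ Finset.range n, K θ (h k) (h (k + 1)))
    (hcy : ∀ (n : ℕ) (h : ℕ → S), νy {ω | ∀ i < n + 1, ω i = h i} =
      (if h 0 = y then 1 else 0) * ∏ k ∈ Finset.range n, K θ (h k) (h (k + 1)))
    (hrecx : ∀ᵐ ω ∂νx, {n | ω n = x}.Infinite)
    (g : List S) (hg : g ≠ []) (hg0 : g.getD 0 d = x) (hgl : lastD d g = y)
    (hgw : wt K θ g ≠ 0) :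
    ∑' q : ↥(Cont d x), wt K θ (y :: (q : List S)) = 1 := by
  set H := ∑' q : ↥(Cont d x), wt K θ (y :: (q : List S)) with hH
  have hle : H ≤ 1 := tsum_cont_le_one K θ d x y νy hcy
  refine le_antisymm hle ?_
  have hnull : νx {ω | ¬ ({n | ω n = x}).Infinite} = 0 := ae_iff.1 hrecx
  have hdisj : Pairwise (Function.onFun Disjoint fun q : ↥(Cont d x) => CylL d (g ++ (q : List S))) :=
    fun a b hab => cylL_disjoint d x g a.2 b.2 (Subtype.coe_injective.ne hab)
  have hmeas : ∀ q : ↥(Cont d x), MeasurableSet (CylL d (g ++ (q : List S))) :=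
    fun q => cylL_measurable d _
  have hu : νx (⋃ q : ↥(Cont d x), CylL d (g ++ (q : List S)))
      = ∑' q : ↥(Cont d x), νx (CylL d (g ++ (q : List S))) := measure_iUnion hdisj hmeas
  have hval : ∀ q : ↥(Cont d x),
      νx (CylL d (g ++ (q : List S))) = wt K θ g * wt K θ (y :: (q : List S)) := by
    intro q
    rw [meas_cylL K θ d x νx hcx _ (by simp [hg]),
      getD_append_left _ _ (List.length_pos_iff.2 hg), hg0, if_pos rfl, one_mul,
      wt_append K θ d g hg, hgl]
  have hcylg : νx (CylL d g) = wt K θ g := by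
    rw [meas_cylL K θ d x νx hcx g hg, hg0, if_pos rfl, one_mul]
  have hchain : wt K θ g ≤ wt K θ g * H := by
    calc wt K θ g = νx (CylL d g) := hcylg.symm
      _ ≤ νx {ω | ¬ ({n | ω n = x}).Infinite}
          + νx (⋃ q : ↥(Cont d x), CylL d (g ++ (q : List S))) :=
        (measure_mono (cylL_cover d x g hg)).trans (measure_union_le _ _)
      _ = ∑' q : ↥(Cont d x), νx (CylL d (g ++ (q : List S))) := by rw [hnull, zero_add, hu]
      _ = wt K θ g * H := by
          rw [hH]
          rw [tsum_congr hval]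
          exact ENNReal.tsum_mul_left
  exact (ENNReal.mul_le_mul_iff_right hgw (wt_ne_top K θ g)).1 (by simpa using hchain)

end Measures


lemma enn_cancel {a b c : ENNReal} (h0 : a ≠ 0) (ht : a ≠ ⊤) (h : a * b = a * c) : b = c :=
  le_antisymm ((ENNReal.mul_le_mul_iff_right h0 ht).1 h.le)
    ((ENNReal.mul_le_mul_iff_right h0 ht).1 h.ge)

lemma lastD_append (d : S) (l q : List S) (hq : q ≠ []) :
    lastD d (l ++ q) = lastD d q := by
  have hqpos : 0 < q.length := List.length_pos_iff.2 hq
  have h1 : (l ++ q).length - 1 = l.length + (q.length - 1) := by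
    rw [List.length_append]; omega
  rw [lastD, h1, getD_append_right]
  rfl

lemma wt_tsum_cont (K : Θ → S → PMF S) (θ : Θ) (d x0 : S)
    (hH : ∀ y : S, ∑' q : ↥(Cont d x0), wt K θ (y :: (q : List S)) = 1)
    (l : List S) (hl : l ≠ []) :
    wt K θ l = ∑' q : ↥(Cont d x0), wt K θ (l ++ (q : List S)) := by
  rw [tsum_congr (fun q : ↥(Cont d x0) => wt_append K θ d l hl (q : List S))]
  rw [ENNReal.tsum_mul_left, hH (lastD d l), mul_one]

lemma loop_eq (K : Θ → S → PMF S) (θ θ' : Θ) (d x0 : S)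
    (hw : ∀ q ∈ Cont d x0, wt K θ (x0 :: q) = wt K θ' (x0 :: q)) :
    ∀ (n : ℕ) (l : List S), l.length ≤ n → l ≠ [] → l.getD 0 d = x0 → lastD d l = x0 →
      wt K θ l = wt K θ' l := by
  intro n
  induction n with
  | zero =>
    intro l h hne _ _
    exact absurd (List.length_pos_iff.2 hne) (by omega)
  | succ n IH =>
    intro l hlen hne h0 hlast
    obtain ⟨a, t, rfl⟩ := List.exists_cons_of_ne_nil hne
    have ha : x0 = a := by symm; simpa using h0
    subst ha
    rcases eq_or_ne t [] with rfl | ht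
    · simp
    · have htpos : 0 < t.length := List.length_pos_iff.2 ht
      have hex : ∃ m, m < t.length ∧ t.getD m d = x0 := by
        refine ⟨t.length - 1, by omega, ?_⟩
        have h2 := hlast
        rwa [lastD_cons d x0 t ht] at h2
      classical
      set m := Nat.find hex with hm
      obtain ⟨hmlt, hmx⟩ := Nat.find_spec hex
      set q := t.take (m + 1) with hqd
      set r := t.drop (m + 1) with hrd
      have hqlen : q.length = m + 1 := by
        rw [hqd, List.length_take]; omega
      have hqne : q ≠ [] := by
        intro h; rw [h] at hqlen; simp at hqlen
      have hqget : ∀ j, j < q.length → q.getD j d = t.getD j d := by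
        intro j hj
        have hjt : j < t.length := by omega
        rw [getD_lt hj d, getD_lt hjt d]
        exact List.getElem_take
      have hqlast : lastD d q = x0 := by
        rw [lastD, hqget _ (by omega)]
        have hq1 : q.length - 1 = m := by omega
        rw [hq1]
        exact hmx
      have hqcont : q ∈ Cont d x0 := by
        refine ⟨hqne, hqlast, ?_⟩
        intro i hi
        rw [hqget _ (by omega)]
        intro hix
        exact Nat.find_min hex (by omega) ⟨by omega, hix⟩
      have hsplit : x0 :: t = (x0 :: q) ++ r := by
        rw [hqd, hrd]
        simp [List.take_append_drop]
      have hlq : lastD d (x0 :: q) = x0 := by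
        rw [lastD_cons d x0 q hqne]; exact hqlast
      rw [hsplit, wt_append K θ d (x0 :: q) (by simp), wt_append K θ' d (x0 :: q) (by simp), hlq]
      have e1 : wt K θ (x0 :: q) = wt K θ' (x0 :: q) := hw q hqcont
      rcases eq_or_ne r [] with hr0 | hrne
      · rw [hr0, e1]; simp
      · have hrlen : r.length = t.length - (m + 1) := by rw [hrd, List.length_drop]
        have hrpos : 0 < r.length := List.length_pos_iff.2 hrne
        have hrlast : lastD d r = x0 := by
          have h1 : r.getD (r.length - 1) d = t.getD (m + 1 + (r.length - 1)) d := by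
            rw [getD_lt (by omega : r.length - 1 < r.length) d,
              getD_lt (by omega : m + 1 + (r.length - 1) < t.length) d]
            exact List.getElem_drop
          have h2 := hlast
          rw [lastD_cons d x0 t ht] at h2
          rw [lastD, h1]
          have hidx : m + 1 + (r.length - 1) = t.length - 1 := by omega
          rw [hidx]
          exact h2
        have e2 : wt K θ (x0 :: r) = wt K θ' (x0 :: r) := by
          apply IH (x0 :: r) ?_ (by simp) (by simp) ?_
          · have : (x0 :: t).length ≤ n + 1 := hlen
            simp only [List.length_cons] at this ⊢
            omega
          · rw [lastD_cons d x0 r hrne]; exact hrlast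
        rw [e1, e2]

lemma path_eq (K : Θ → S → PMF S) (θ θ' : Θ) (d x0 : S)
    (hHθ : ∀ y : S, ∑' q : ↥(Cont d x0), wt K θ (y :: (q : List S)) = 1)
    (hHθ' : ∀ y : S, ∑' q : ↥(Cont d x0), wt K θ' (y :: (q : List S)) = 1)
    (hw : ∀ q ∈ Cont d x0, wt K θ (x0 :: q) = wt K θ' (x0 :: q)) :
    ∀ l : List S, l ≠ [] → l.getD 0 d = x0 → wt K θ l = wt K θ' l := by
  intro l hl h0
  rw [wt_tsum_cont K θ d x0 hHθ l hl, wt_tsum_cont K θ' d x0 hHθ' l hl]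
  apply tsum_congr
  intro q
  apply loop_eq K θ θ' d x0 hw (l ++ (q : List S)).length _ (le_refl _) (by simp [hl]) ?_ ?_
  · rw [getD_append_left _ _ (List.length_pos_iff.2 hl)]; exact h0
  · rw [lastD_append d l _ q.2.1]; exact q.2.2.1

end Stmt17Aux

open Stmt17Aux in
/-- Identifiability of the prior over a finite family of pairwise distinct, irreducible,
recurrent transition kernels from the mixture distribution over infinite trajectories:
if two priors induce the same trajectory distribution (rolling out from a full-support
initial distribution λ), they are equal. -/
theorem stmt17 {S Θ : Type*} [Countable S] [DecidableEq S] [MeasurableSpace S]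
    [MeasurableSingletonClass S] [Fintype Θ]
    (K : Θ → S → PMF S) (hKinj : Function.Injective K)
    -- n-step transition probabilities of each kernel
    (stepn : Θ → ℕ → S → S → ENNReal)
    (hstep0 : ∀ θ x y, stepn θ 0 x y = if x = y then 1 else 0)
    (hstepS : ∀ θ n x y, stepn θ (n + 1) x y = ∑' z, K θ x z * stepn θ n z y)
    -- irreducibility of each kernel
    (hirr : ∀ θ x y, ∃ n, stepn θ n x y ≠ 0)
    -- chain measures of kernel θ started from each state x, and recurrence
    (ν : Θ → S → Measure (ℕ → S)) (hνprob : ∀ θ x, IsProbabilityMeasure (ν θ x))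
    (hνcyl : ∀ θ (x : S) (n : ℕ) (h : ℕ → S),
      ν θ x {ω | ∀ i < n + 1, ω i = h i} =
        (if h 0 = x then 1 else 0) * ∏ k ∈ Finset.range n, K θ (h k) (h (k + 1)))
    (hrec : ∀ θ x, ∀ᵐ ω ∂ ν θ x, {n | ω n = x}.Infinite)
    -- full-support initial distribution
    (lam : S → ENNReal) (hlam1 : ∑' x, lam x = 1) (hlampos : ∀ x, lam x ≠ 0)
    -- priors and their induced mixture trajectory distributions
    (p p' : Θ → ENNReal) (hp1 : ∑ θ, p θ = 1) (hp'1 : ∑ θ, p' θ = 1)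
    (μ μ' : Measure (ℕ → S))
    (hμcyl : ∀ (n : ℕ) (h : ℕ → S),
      μ {ω | ∀ i < n + 1, ω i = h i} =
        ∑ θ, p θ * (lam (h 0) * ∏ k ∈ Finset.range n, K θ (h k) (h (k + 1))))
    (hμ'cyl : ∀ (n : ℕ) (h : ℕ → S),
      μ' {ω | ∀ i < n + 1, ω i = h i} =
        ∑ θ, p' θ * (lam (h 0) * ∏ k ∈ Finset.range n, K θ (h k) (h (k + 1))))
    (heq : μ = μ') :
    p = p' := by
  classical
  -- S is nonempty
  have hSne : Nonempty S := by
    by_contra h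
    rw [not_nonempty_iff] at h
    rw [tsum_empty] at hlam1
    exact one_ne_zero hlam1.symm
  obtain ⟨x0⟩ := hSne
  -- hitting sums are 1
  have hH : ∀ θ (y : S), ∑' q : ↥(Cont x0 x0), wt K θ (y :: (q : List S)) = 1 := by
    intro θ y
    obtain ⟨n, hn⟩ := hirr θ x0 y
    obtain ⟨g, hg, hg0, hgl, hgw⟩ := exists_pos_path K θ x0 stepn hstep0 hstepS n x0 y hn
    haveI := hνprob θ x0
    haveI := hνprob θ y
    exact Hone K θ x0 x0 y (ν θ x0) (ν θ y) (hνcyl θ x0) (hνcyl θ y) (hrec θ x0)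
      g hg hg0 hgl hgw
  -- distinct kernels differ on some excursion
  have hdist : ∀ θ1 θ2 : Θ, θ1 ≠ θ2 →
      ∃ q ∈ Cont x0 x0, wt K θ1 (x0 :: q) ≠ wt K θ2 (x0 :: q) := by
    intro θ1 θ2 hne
    by_contra hall
    push_neg at hall
    apply hne
    apply hKinj
    funext y
    apply PMF.ext
    intro z
    obtain ⟨n, hn⟩ := hirr θ1 x0 y
    obtain ⟨l, hl, h0, hlast, hwpos⟩ := exists_pos_path K θ1 x0 stepn hstep0 hstepS n x0 y hn
    have hpe := path_eq K θ1 θ2 x0 x0 (hH θ1) (hH θ2) hall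
    have e1 : wt K θ1 l = wt K θ2 l := hpe l hl h0
    have e2 := hpe (l ++ [z]) (by simp [hl])
      (by rw [getD_append_left _ _ (List.length_pos_iff.2 hl)]; exact h0)
    rw [wt_append K θ1 x0 l hl, wt_append K θ2 x0 l hl, hlast, ← e1] at e2
    have e3 : wt K θ1 (y :: [z]) = wt K θ2 (y :: [z]) :=
      enn_cancel hwpos (wt_ne_top K θ1 l) e2
    simpa using e3
  -- step A: equality of mixture weights on every path
  have keyA : ∀ l : List S, l ≠ [] →
      ∑ θ : Θ, p θ * wt K θ l = ∑ θ : Θ, p' θ * wt K θ l := by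
    intro l hl
    have hpos : 0 < l.length := List.length_pos_iff.2 hl
    have h1 := hμcyl (l.length - 1) (fun i => l.getD i x0)
    have h2 := hμ'cyl (l.length - 1) (fun i => l.getD i x0)
    rw [heq] at h1
    have h3 := h1.symm.trans h2
    have hwp : ∀ θ : Θ, (∏ k ∈ Finset.range (l.length - 1),
        K θ (l.getD k x0) (l.getD (k + 1) x0)) = wt K θ l :=
      fun θ => (wt_eq_prod K θ x0 l hl).symm
    simp only [hwp] at h3
    have h4 : lam (l.getD 0 x0) * ∑ θ : Θ, p θ * wt K θ l
        = lam (l.getD 0 x0) * ∑ θ : Θ, p' θ * wt K θ l := by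
      rw [Finset.mul_sum, Finset.mul_sum]
      have hre : ∀ (f : Θ → ENNReal), ∑ θ : Θ, lam (l.getD 0 x0) * (f θ * wt K θ l)
          = ∑ θ : Θ, f θ * (lam (l.getD 0 x0) * wt K θ l) :=
        fun f => Finset.sum_congr rfl (fun θ _ => by ring)
      rw [hre p, hre p']
      exact h3
    have hlamne : lam (l.getD 0 x0) ≠ 0 := hlampos _
    have hlamtop : lam (l.getD 0 x0) ≠ ⊤ := by
      intro htop
      have hle : lam (l.getD 0 x0) ≤ 1 := hlam1 ▸ ENNReal.le_tsum _
      rw [htop] at hle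
      simp at hle
    exact enn_cancel hlamne hlamtop h4
  -- finiteness of priors
  have hpt : ∀ θ, p θ ≠ ⊤ := by
    intro θ h
    have h2 : p θ ≤ 1 := hp1 ▸ Finset.single_le_sum (fun i _ => zero_le) (Finset.mem_univ θ)
    rw [h] at h2
    simp at h2
  have hpt' : ∀ θ, p' θ ≠ ⊤ := by
    intro θ h
    have h2 : p' θ ≤ 1 := hp'1 ▸ Finset.single_le_sum (fun i _ => zero_le) (Finset.mem_univ θ)
    rw [h] at h2
    simp at h2
  -- real coefficients
  set c : Θ → ℝ := fun θ => (p θ).toReal - (p' θ).toReal with hc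
  have mixR : ∀ (T : Finset Θ) (g : Θ → List S), (∀ η ∈ T, g η ∈ Cont x0 x0) →
      ∀ l : List S, l ≠ [] → l.getD 0 x0 = x0 → lastD x0 l = x0 →
      ∑ θ : Θ, c θ * ((wt K θ l).toReal
        * ∏ η ∈ T, (wt K θ (x0 :: g η)).toReal) = 0 := by
    intro T
    induction T using Finset.induction_on with
    | empty =>
      intro g _ l hl h0 _
      simp only [Finset.prod_empty, mul_one]
      have hA := keyA l hl
      have hfin1 : ∀ θ ∈ Finset.univ, p θ * wt K θ l ≠ (⊤ : ENNReal) :=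
        fun θ _ => ENNReal.mul_ne_top (hpt θ) (wt_ne_top K θ l)
      have hfin2 : ∀ θ ∈ Finset.univ, p' θ * wt K θ l ≠ (⊤ : ENNReal) :=
        fun θ _ => ENNReal.mul_ne_top (hpt' θ) (wt_ne_top K θ l)
      have hR := congrArg ENNReal.toReal hA
      rw [ENNReal.toReal_sum hfin1, ENNReal.toReal_sum hfin2] at hR
      simp only [ENNReal.toReal_mul] at hR
      calc ∑ θ : Θ, c θ * (wt K θ l).toReal
          = ∑ θ : Θ, ((p θ).toReal * (wt K θ l).toReal
            - (p' θ).toReal * (wt K θ l).toReal) := by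
            refine Finset.sum_congr rfl (fun θ _ => ?_)
            rw [hc]; ring
        _ = ∑ θ : Θ, (p θ).toReal * (wt K θ l).toReal
            - ∑ θ : Θ, (p' θ).toReal * (wt K θ l).toReal := Finset.sum_sub_distrib _ _
        _ = 0 := sub_eq_zero.2 hR
    | @insert η T hη IH =>
      intro g hg l hl h0 hlast
      have hgη : g η ∈ Cont x0 x0 := hg η (Finset.mem_insert_self _ _)
      have IH2 := IH g (fun a ha => hg a (Finset.mem_insert_of_mem ha)) (l ++ g η)
        (by simp [hl])
        (by rw [getD_append_left _ _ (List.length_pos_iff.2 hl)]; exact h0)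
        (by rw [lastD_append x0 l _ hgη.1]; exact hgη.2.1)
      calc ∑ θ : Θ, c θ * ((wt K θ l).toReal
            * ∏ η' ∈ insert η T, (wt K θ (x0 :: g η')).toReal)
          = ∑ θ : Θ, c θ * ((wt K θ (l ++ g η)).toReal
            * ∏ η' ∈ T, (wt K θ (x0 :: g η')).toReal) := by
            refine Finset.sum_congr rfl (fun θ _ => ?_)
            rw [Finset.prod_insert hη, wt_append K θ x0 l hl, hlast, ENNReal.toReal_mul]
            ring
        _ = 0 := IH2
  -- conclude, prior value by prior value
  funext θ0
  have hcont0 : ([x0] : List S) ∈ Cont x0 x0 := by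
    refine ⟨by simp, rfl, ?_⟩
    intro i hi
    simp at hi
  set f : Θ → List S := fun η =>
    if h : η = θ0 then [x0] else Classical.choose (hdist η θ0 h) with hf
  have hfC : ∀ η, f η ∈ Cont x0 x0 := by
    intro η
    by_cases h : η = θ0
    · simp [hf, h, hcont0]
    · simp only [hf, dif_neg h]
      exact (Classical.choose_spec (hdist η θ0 h)).1
  have hfne : ∀ η, η ≠ θ0 → wt K η (x0 :: f η) ≠ wt K θ0 (x0 :: f η) := by
    intro η h
    simp only [hf, dif_neg h]
    exact (Classical.choose_spec (hdist η θ0 h)).2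
  set F : Finset Θ := Finset.univ.erase θ0 with hF
  have hmix : ∀ T : Finset Θ,
      ∑ θ : Θ, c θ * ∏ η ∈ T, (wt K θ (x0 :: f η)).toReal = 0 := by
    intro T
    have := mixR T f (fun η _ => hfC η) [x0] (by simp) (by simp) rfl
    simpa using this
  have hexp : ∑ θ : Θ, c θ * ∏ η ∈ F,
      ((wt K θ (x0 :: f η)).toReal - (wt K η (x0 :: f η)).toReal) = 0 := by
    have hrw : ∀ θ : Θ, ∏ η ∈ F, ((wt K θ (x0 :: f η)).toReal - (wt K η (x0 :: f η)).toReal)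
        = ∑ T ∈ F.powerset, (∏ η ∈ T, (wt K θ (x0 :: f η)).toReal)
          * ∏ η ∈ F \ T, (-(wt K η (x0 :: f η)).toReal) := by
      intro θ
      rw [← Finset.prod_add]
      refine Finset.prod_congr rfl (fun η _ => ?_)
      ring
    calc ∑ θ : Θ, c θ * ∏ η ∈ F,
          ((wt K θ (x0 :: f η)).toReal - (wt K η (x0 :: f η)).toReal)
        = ∑ θ : Θ, ∑ T ∈ F.powerset, c θ * ((∏ η ∈ T, (wt K θ (x0 :: f η)).toReal)
            * ∏ η ∈ F \ T, (-(wt K η (x0 :: f η)).toReal)) := by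
          refine Finset.sum_congr rfl (fun θ _ => ?_)
          rw [hrw θ, Finset.mul_sum]
      _ = ∑ T ∈ F.powerset, ∑ θ : Θ, c θ * ((∏ η ∈ T, (wt K θ (x0 :: f η)).toReal)
            * ∏ η ∈ F \ T, (-(wt K η (x0 :: f η)).toReal)) := Finset.sum_comm
      _ = ∑ T ∈ F.powerset, (∑ θ : Θ, c θ * ∏ η ∈ T, (wt K θ (x0 :: f η)).toReal)
            * ∏ η ∈ F \ T, (-(wt K η (x0 :: f η)).toReal) := by
          refine Finset.sum_congr rfl (fun T _ => ?_)
          rw [Finset.sum_mul]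
          refine Finset.sum_congr rfl (fun θ _ => ?_)
          ring
      _ = 0 := Finset.sum_eq_zero (fun T _ => by rw [hmix T, zero_mul])
  have heval : ∑ θ : Θ, c θ * ∏ η ∈ F,
      ((wt K θ (x0 :: f η)).toReal - (wt K η (x0 :: f η)).toReal)
      = c θ0 * ∏ η ∈ F, ((wt K θ0 (x0 :: f η)).toReal - (wt K η (x0 :: f η)).toReal) := by
    apply Finset.sum_eq_single θ0
    · intro θ _ hθ
      have hz : ∏ η ∈ F, ((wt K θ (x0 :: f η)).toReal - (wt K η (x0 :: f η)).toReal) = 0 :=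
        Finset.prod_eq_zero (Finset.mem_erase.2 ⟨hθ, Finset.mem_univ θ⟩) (by simp)
      rw [hz, mul_zero]
    · intro h
      exact absurd (Finset.mem_univ θ0) h
  have hprodne : ∏ η ∈ F, ((wt K θ0 (x0 :: f η)).toReal - (wt K η (x0 :: f η)).toReal) ≠ 0 := by
    rw [Finset.prod_ne_zero_iff]
    intro η hη
    have hne : η ≠ θ0 := (Finset.mem_erase.1 hη).1
    refine sub_ne_zero.2 ?_
    intro hE
    exact hfne η hne ((ENNReal.toReal_eq_toReal_iff' (wt_ne_top K η _) (wt_ne_top K θ0 _)).1 hE.symm)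
  have hc0 : c θ0 = 0 := by
    have h5 := hexp.symm.trans heval
    rcases mul_eq_zero.1 h5.symm with h | h
    · exact h
    · exact absurd h hprodne
  have hR : (p θ0).toReal = (p' θ0).toReal := by
    have h6 : (p θ0).toReal - (p' θ0).toReal = 0 := hc0
    linarith
  exact (ENNReal.toReal_eq_toReal_iff' (hpt θ0) (hpt' θ0)).1 hR
end
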